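/- Let (S_n) be the house-of-cards chain with decreasing parameters (γ_n), γ_n → 0. If Σ_{m≥1} ∏_{k=0}^{m}(1-γ_k) = +∞, then P(S_n = 0) → 0 as n → ∞. -/

import Mathlib

open Finset

/-- `hoc γ n j` is the probability `P(S_n = j)` for the "house of cards" Markov chain on `ℕ`
starting at `0`, with transition probabilities `p_{i,i+1} = 1 - γ i` and `p_{i,0} = γ i`. -/
noncomputable def hoc (γ : ℕ → ℝ) : ℕ → ℕ → ℝ
  | 0, j => if j = 0 then 1 else 0
  | n + 1, 0 => ∑ i ∈ Finset.range (n + 1), γ i * hoc γ n i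
  | n + 1, j + 1 => (1 - γ j) * hoc γ n j

/-- `ptau γ n` is `P(τ = n)`, the distribution of the first return time to `0`:
`P(τ = n) = γ_{n-1} ∏_{m=0}^{n-2} (1 - γ_m)` for `n ≥ 1`, and `0` for `n = 0`. -/
noncomputable def ptau (γ : ℕ → ℝ) (n : ℕ) : ℝ :=
  if n = 0 then 0 else γ (n - 1) * ∏ m ∈ Finset.range (n - 1), (1 - γ m)

/-- `tailS γ n k = P(S_n ≥ k)` (the chain satisfies `S_n ≤ n`). -/
noncomputable def tailS (γ : ℕ → ℝ) (n k : ℕ) : ℝ :=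
  ∑ j ∈ Finset.Icc k n, hoc γ n j

/-!
Write `u n = P(S_n = 0)` and `a j = ∏_{k<j} (1 - γ_k)`. Since `γ` is antitone, the one-step
transition operator of the chain preserves antitone functions, so `n ↦ E[φ(S_n)]` is antitone for
every antitone `φ`; with `φ = 𝟙_{0}` this makes `u` antitone. A path ending at `j ≤ n` last visited
`0` at time `n - j`, so `P(S_n = j) = a j * u (n - j)` and hence `1 = ∑_{j ≤ n} a j u (n - j)
≥ u n ∑_{j ≤ n} a j`. The right-hand sum diverges, which forces `u n → 0`.
-/

section
variable {γ : ℕ → ℝ}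

theorem hoc_nonneg (hγ0 : ∀ k, 0 ≤ γ k) (hγ1 : ∀ k, γ k ≤ 1) (n j : ℕ) : 0 ≤ hoc γ n j := by
  induction n generalizing j with
  | zero => unfold hoc; positivity
  | succ n ih =>
    cases j with
    | zero => exact sum_nonneg fun i _ => mul_nonneg (hγ0 i) (ih i)
    | succ j => exact mul_nonneg (sub_nonneg.2 (hγ1 j)) (ih j)

theorem sum_range_hoc (n : ℕ) : ∑ j ∈ range (n + 1), hoc γ n j = 1 := by
  induction n with
  | zero => simp [hoc]
  | succ n ih =>
    rw [sum_range_succ']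
    simp only [hoc]
    rw [← sum_add_distrib]
    exact (sum_congr rfl fun j _ => by ring).trans ih

theorem hoc_eq_prod_mul_hoc_zero {j n : ℕ} (h : j ≤ n) :
    hoc γ n j = (∏ k ∈ range j, (1 - γ k)) * hoc γ (n - j) 0 := by
  induction j generalizing n with
  | zero => simp
  | succ j ih =>
    obtain ⟨m, rfl⟩ := Nat.exists_eq_add_of_le' (Nat.zero_lt_of_lt h)
    rw [hoc, ih (by omega), prod_range_succ, Nat.add_sub_add_right]
    ring

noncomputable def hocExpect (γ : ℕ → ℝ) (n : ℕ) (φ : ℕ → ℝ) : ℝ :=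
  ∑ j ∈ range (n + 1), φ j * hoc γ n j

def hocTransition (γ : ℕ → ℝ) (φ : ℕ → ℝ) (j : ℕ) : ℝ :=
  γ j * φ 0 + (1 - γ j) * φ (j + 1)

theorem hocExpect_succ (n : ℕ) (φ : ℕ → ℝ) :
    hocExpect γ (n + 1) φ = hocExpect γ n (hocTransition γ φ) := by
  simp only [hocExpect, hocTransition]
  rw [sum_range_succ']
  simp only [hoc, mul_sum, add_mul, sum_add_distrib]
  rw [add_comm]
  congr 1 <;> exact sum_congr rfl fun _ _ => by ring

theorem antitone_hocTransition (hdec : Antitone γ) (hγ1 : ∀ k, γ k ≤ 1) {φ : ℕ → ℝ}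
    (hφ : Antitone φ) : Antitone (hocTransition γ φ) := by
  refine antitone_nat_of_succ_le fun j => ?_
  have hγ : γ (j + 1) ≤ γ j := hdec j.le_succ
  have hφ0 : φ (j + 1) ≤ φ 0 := hφ (Nat.zero_le _)
  have hφ1 : φ (j + 2) ≤ φ (j + 1) := hφ (Nat.le_succ _)
  -- `Pφ(j) - Pφ(j+1) = (1 - γ_{j+1})(φ(j+1) - φ(j+2)) + (γ_j - γ_{j+1})(φ(0) - φ(j+1))`
  simp only [hocTransition]
  nlinarith [mul_nonneg (sub_nonneg.2 (hγ1 (j + 1))) (sub_nonneg.2 hφ1),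
    mul_nonneg (sub_nonneg.2 hγ) (sub_nonneg.2 hφ0)]

theorem hocExpect_succ_le (hdec : Antitone γ) (hγ1 : ∀ k, γ k ≤ 1) {φ : ℕ → ℝ}
    (hφ : Antitone φ) (n : ℕ) : hocExpect γ (n + 1) φ ≤ hocExpect γ n φ := by
  induction n generalizing φ with
  | zero =>
    have hφ1 : φ 1 ≤ φ 0 := hφ zero_le_one
    rw [hocExpect_succ]
    simp [hocExpect, hocTransition, hoc]
    nlinarith [mul_le_mul_of_nonneg_left hφ1 (sub_nonneg.2 (hγ1 0))]
  | succ n ih =>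
    rw [hocExpect_succ (n + 1), hocExpect_succ n φ]
    exact ih (antitone_hocTransition hdec hγ1 hφ)

theorem antitone_hoc_zero (hdec : Antitone γ) (hγ1 : ∀ k, γ k ≤ 1) :
    Antitone fun n => hoc γ n 0 := by
  have hφ : Antitone fun j : ℕ => if j = 0 then (1 : ℝ) else 0 :=
    antitone_nat_of_succ_le fun j => by split_ifs <;> simp_all
  have hexp (n : ℕ) : hocExpect γ n (fun j => if j = 0 then 1 else 0) = hoc γ n 0 := by
    simp [hocExpect]
  exact antitone_nat_of_succ_le fun n => by
    simpa only [hexp] using hocExpect_succ_le hdec hγ1 hφ n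

theorem hoc_zero_mul_sum_prod_le_one (hdec : Antitone γ) (hγ1 : ∀ k, γ k ≤ 1) (n : ℕ) :
    hoc γ n 0 * ∑ j ∈ range (n + 1), ∏ k ∈ range j, (1 - γ k) ≤ 1 := by
  calc hoc γ n 0 * ∑ j ∈ range (n + 1), ∏ k ∈ range j, (1 - γ k)
      ≤ ∑ j ∈ range (n + 1), (∏ k ∈ range j, (1 - γ k)) * hoc γ (n - j) 0 := by
        rw [mul_sum]
        refine sum_le_sum fun j _ => ?_
        rw [mul_comm]
        exact mul_le_mul_of_nonneg_left (antitone_hoc_zero hdec hγ1 (n.sub_le j))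
          (prod_nonneg fun k _ => sub_nonneg.2 (hγ1 k))
    _ = ∑ j ∈ range (n + 1), hoc γ n j := sum_congr rfl fun j hj =>
          (hoc_eq_prod_mul_hoc_zero (Nat.lt_succ_iff.1 (mem_range.1 hj))).symm
    _ = 1 := sum_range_hoc n

theorem tendsto_sum_range_prod_one_sub_atTop (hγ1 : ∀ k, γ k ≤ 1)
    (hdiv : ¬ Summable fun m => ∏ k ∈ range (m + 1), (1 - γ k)) :
    Filter.Tendsto (fun n => ∑ j ∈ range (n + 1), ∏ k ∈ range j, (1 - γ k))
      Filter.atTop Filter.atTop := by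
  have hdiv' : ¬ Summable fun j => ∏ k ∈ range j, (1 - γ k) :=
    fun h => hdiv ((summable_nat_add_iff (f := fun j => ∏ k ∈ range j, (1 - γ k)) 1).2 h)
  exact ((not_summable_iff_tendsto_nat_atTop_of_nonneg
    fun j => prod_nonneg fun k _ => sub_nonneg.2 (hγ1 k)).1 hdiv').comp
    (Filter.tendsto_add_atTop_nat 1)

end

open Filter in
theorem hoc_tendsto_zero_general (γ : ℕ → ℝ) (hdec : Antitone γ) (hγ0 : ∀ k, 0 ≤ γ k)
    (hγ1 : ∀ k, γ k < 1)
    (hdiv : ¬ Summable (fun m => ∏ k ∈ Finset.range (m + 1), (1 - γ k))) :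
    Tendsto (fun n => hoc γ n 0) atTop (nhds 0) := by
  have hγ1' : ∀ k, γ k ≤ 1 := fun k => (hγ1 k).le
  have hA := tendsto_sum_range_prod_one_sub_atTop hγ1' hdiv
  refine tendsto_of_tendsto_of_tendsto_of_le_of_le' tendsto_const_nhds hA.inv_tendsto_atTop
    (Eventually.of_forall fun n => hoc_nonneg hγ0 hγ1' n 0) ?_
  filter_upwards [hA.eventually_gt_atTop 0] with n hn
  rw [Pi.inv_apply, ← one_div, le_div_iff₀ hn]
  exact hoc_zero_mul_sum_prod_le_one hdec hγ1' n

open Filter in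
/-- If `Σ_m ∏_{k=0}^m (1-γ_k) = +∞` (the chain is not positive recurrent), then
`P(S_n = 0) → 0` as `n → ∞`. -/
theorem hoc_tendsto_zero (γ : ℕ → ℝ) (hdec : Antitone γ) (hγ0 : ∀ k, 0 ≤ γ k)
    (hγ1 : ∀ k, γ k < 1) (hγlim : Tendsto γ atTop (nhds 0))
    (hdiv : ¬ Summable (fun m => ∏ k ∈ Finset.range (m + 1), (1 - γ k))) :
    Tendsto (fun n => hoc γ n 0) atTop (nhds 0) :=
  hoc_tendsto_zero_general γ hdec hγ0 hγ1 hdiv
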